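/- Let N be an acyclic CP-net with induced flip-based preference ≻, outcomes o₁ = R·x₁·o₁′ and o₂ = R·x₂·o₂′ sharing ancestor assignment R at variable X, with x₁ ≻ x₂ given R, and let x_i be a value with x₁ ≻ x_i ≻ x₂ given R. Let N_i be the sub-CP-net restricted to R·x_i with induced preference ≻_i. If o₁′ ≻_i o₂′, then o₁ ≻ o₂. -/

import Mathlib

/-! The outcome `o₁` flips at `X` to `R·xᵢ·o₁′`, which improves to `R·xᵢ·o₂′` by the flips of the
sub-net, and that flips at `X` to `o₂`. Both flips at `X` are legitimate because the parents of `X`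
precede it, so they are fixed by `R` and untouched by changing the value of `X`. -/

open Function Relation

namespace CPNet

variable {n : ℕ} {D : Fin n → Type} (r : ∀ i : Fin n, (∀ j, D j) → D i → D i → Prop)

/-- `a` is obtained from `b` by improving a single variable according to its preference table. -/
def ImprovingFlip (a b : ∀ j, D j) : Prop :=
  ∃ i, (∀ j, j ≠ i → a j = b j) ∧ r i b (a i) (b i)

def ImprovingFlipAfter (k : Fin n) (a b : ∀ j, D j) : Prop :=
  ∃ i, k < i ∧ (∀ j, j ≠ i → a j = b j) ∧ r i b (a i) (b i)

variable {r}

theorem improvingFlipAfter_le_improvingFlip (k : Fin n) :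
    ImprovingFlipAfter r k ≤ ImprovingFlip r :=
  fun _ _ ⟨i, _, hagree, hr⟩ => ⟨i, hagree, hr⟩

section Acyclic

variable {Pa : Fin n → Set (Fin n)} (hPa : ∀ i j, j ∈ Pa i → j < i)
  (hdep : ∀ i o o', (∀ j ∈ Pa i, o j = o' j) → ∀ a b, (r i o a b ↔ r i o' a b))
include hPa hdep

theorem rel_iff_of_eq_of_lt {k : Fin n} {o o' : ∀ j, D j} (h : ∀ j, j < k → o j = o' j)
    (a b : D k) : r k o a b ↔ r k o' a b :=
  hdep k o o' (fun j hj => h j (hPa k j hj)) a b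

theorem improvingFlip_update_right {o : ∀ j, D j} {k : Fin n} {x : D k}
    (h : r k o (o k) x) : ImprovingFlip r o (update o k x) := by
  refine ⟨k, fun j hj => (update_of_ne hj _ _).symm, ?_⟩
  rw [update_self]
  exact (rel_iff_of_eq_of_lt hPa hdep (fun j hj => (update_of_ne hj.ne _ _).symm) _ _).mp h

end Acyclic

theorem improvingFlip_update_left {o : ∀ j, D j} {k : Fin n} {x : D k}
    (h : r k o x (o k)) : ImprovingFlip r (update o k x) o :=
  ⟨k, fun j hj => update_of_ne hj _ _, by rwa [update_self]⟩

end CPNet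

open CPNet in
theorem stmt_15_general {n : ℕ} (D : Fin n → Type)
    (Pa : Fin n → Set (Fin n)) (hPa : ∀ i j, j ∈ Pa i → j < i)
    (r : ∀ i : Fin n, (∀ j, D j) → D i → D i → Prop)
    (hdep : ∀ i o o', (∀ j ∈ Pa i, o j = o' j) → ∀ a b, (r i o a b ↔ r i o' a b))
    (flip : (∀ j, D j) → (∀ j, D j) → Prop)
    (hflip : ∀ a b, flip a b ↔ ∃ i, (∀ j, j ≠ i → a j = b j) ∧ r i b (a i) (b i))
    (pref : (∀ j, D j) → (∀ j, D j) → Prop)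
    (hpref : ∀ a b, pref a b ↔ Relation.TransGen flip a b)
(flipA : Fin n → (∀ j, D j) → (∀ j, D j) → Prop)
    (hflipA : ∀ k a b, flipA k a b ↔
      ∃ i, k < i ∧ (∀ j, j ≠ i → a j = b j) ∧ r i b (a i) (b i))
    (o₁ o₂ : ∀ j, D j) (k : Fin n)
    (hR : ∀ j, j < k → o₁ j = o₂ j)
    (xi : D k)
    (hx1i : r k o₁ (o₁ k) xi) (hxi2 : r k o₁ xi (o₂ k))
    (hsub : Relation.TransGen (flipA k)
      (Function.update o₁ k xi) (Function.update o₂ k xi)) :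
    pref o₁ o₂ := by
  obtain rfl : flip = ImprovingFlip r := by ext a b; exact hflip a b
  obtain rfl : flipA = ImprovingFlipAfter r := by ext k a b; exact hflipA k a b
  have hxi2' : r k o₂ xi (o₂ k) := (rel_iff_of_eq_of_lt hPa hdep hR _ _).mp hxi2
  rw [hpref]
  exact .head (improvingFlip_update_right hPa hdep hx1i)
    ((TransGen.mono (improvingFlipAfter_le_improvingFlip k) _ _ hsub).tail
      (improvingFlip_update_left hxi2'))

theorem stmt_15 {n : ℕ} (D : Fin n → Type) [∀ i, Finite (D i)]
    (Pa : Fin n → Set (Fin n)) (hPa : ∀ i j, j ∈ Pa i → j < i)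
    (r : ∀ i : Fin n, (∀ j, D j) → D i → D i → Prop)
    (hdep : ∀ i o o', (∀ j ∈ Pa i, o j = o' j) → ∀ a b, (r i o a b ↔ r i o' a b))
    (hirr : ∀ i o a, ¬ r i o a a)
    (htrans : ∀ i o a b c, r i o a b → r i o b c → r i o a c)
    (htotal : ∀ i o (a b : D i), a ≠ b → r i o a b ∨ r i o b a)
    (flip : (∀ j, D j) → (∀ j, D j) → Prop)
    (hflip : ∀ a b, flip a b ↔ ∃ i, (∀ j, j ≠ i → a j = b j) ∧ r i b (a i) (b i))
    (pref : (∀ j, D j) → (∀ j, D j) → Prop)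
    (hpref : ∀ a b, pref a b ↔ Relation.TransGen flip a b)
(flipA : Fin n → (∀ j, D j) → (∀ j, D j) → Prop)
    (hflipA : ∀ k a b, flipA k a b ↔
      ∃ i, k < i ∧ (∀ j, j ≠ i → a j = b j) ∧ r i b (a i) (b i))
    (o₁ o₂ : ∀ j, D j) (k : Fin n)
    (hR : ∀ j, j < k → o₁ j = o₂ j)
    (xi : D k)
    (hx1i : r k o₁ (o₁ k) xi) (hxi2 : r k o₁ xi (o₂ k))
    (hsub : Relation.TransGen (flipA k)
      (Function.update o₁ k xi) (Function.update o₂ k xi)) :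
    pref o₁ o₂ :=
  stmt_15_general D Pa hPa r hdep flip hflip pref hpref flipA hflipA o₁ o₂ k hR xi hx1i hxi2 hsub
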